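/- arXiv:2206.07688 — 2 statements merged into one kernel-verified Lean document; each statement's English description precedes it below -/
import Mathlib

section
/- (Co-area formulae.) Let (G,m) be a summable weighted graph and for g : V → ℝ and t ∈ ℝ write P_t(g) = {v ∈ V : g(v) > t}. Then for every f ∈ L²(G,m): (a) ∫₀^∞ m(P_t(f²)) dt = ∑_{v ∈ V} m(v)·f(v)², and (b) ∫₀^∞ m(∂P_t(f²)) dt = (1/2)·∑_{(u,v) ∈ V×V} m(u,v)·|f(u)² − f(v)²| (the right-hand side being the sum over edges uv of m(u,v)·|f(u)² − f(v)²|). -/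
open MeasureTheory

/-- A summable weighted graph on a vertex set `V`. -/
structure SummableWeightedGraph (V : Type*) where
  m : V → V → ℝ
  symm : ∀ u v, m u v = m v u
  nonneg : ∀ u v, 0 ≤ m u v
  loopless : ∀ v, m v v = 0
  summable : Summable fun p : V × V => m p.1 p.2
  noIsolated : ∀ v, 0 < ∑' u, m v u

namespace SummableWeightedGraph

variable {V : Type*} (G : SummableWeightedGraph V)

/-- The weight of a vertex. -/
noncomputable def deg (v : V) : ℝ := ∑' u, G.m v u

/-- The weight of a set of vertices. -/
noncomputable def setWeight (S : Set V) : ℝ := ∑' v : S, G.deg v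

/-- The weight of the boundary of a set of vertices. -/
noncomputable def boundaryWeight (S : Set V) : ℝ :=
  ∑' p : ↥S × ↥Sᶜ, G.m p.1 p.2

/-- The Cheeger constant. -/
noncomputable def cheegerConst : ℝ :=
  sInf { r : ℝ | ∃ S : Set V, S.Nonempty ∧ G.setWeight S ≤ G.setWeight Sᶜ ∧
    r = G.boundaryWeight S / G.setWeight S }

/-- The weighted counting measure on vertices. -/
noncomputable def measure [MeasurableSpace V] : Measure V :=
  Measure.sum fun v => ENNReal.ofReal (G.deg v) • Measure.dirac v

/-- The normalised Laplacian, characterised by its pointwise formula. -/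
def IsLaplacian [MeasurableSpace V]
    (L : Lp ℝ 2 G.measure →L[ℝ] Lp ℝ 2 G.measure) : Prop :=
  ∀ f : Lp ℝ 2 G.measure, ∀ᵐ v ∂G.measure,
    L f v = f v - (G.deg v)⁻¹ * ∑' u, G.m v u * f u

end SummableWeightedGraph

/-! Layer cake: for `g ≥ 0` the weight of the superlevel set `{g > t}` is
`∑ m(v) 𝟙[t < g v]` and its boundary weight is `∑ m(u,v) 𝟙[g v ≤ t < g u]` over ordered pairs.
Exchanging sum and integral over `t > 0` (Tonelli in `ℝ≥0∞`) yields `∑ m(v) g(v)` and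
`∑ m(u,v) (g u - g v)⁺`, and the symmetry of `m` makes the latter half of
`∑ m(u,v) |g u - g v|`. -/

open Set
open scoped ENNReal

theorem integral_tsum_indicator_const {α ι : Type*} [MeasurableSpace α] [Countable ι]
    {μ : Measure α} {w : ι → ℝ} (hw₀ : ∀ i, 0 ≤ w i) (hw : Summable w)
    {s : ι → Set α} (hs : ∀ i, MeasurableSet (s i))
    (hμs : ∀ i, μ (s i) ≠ ∞) :
    ∫ a, ∑' i, (s i).indicator (fun _ => w i) a ∂μ = ∑' i, w i * μ.real (s i) := by
  set F : α → ℝ≥0∞ := fun a => ∑' i, (s i).indicator (fun _ => ENNReal.ofReal (w i)) a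
  have hF_lt_top : ∀ a, F a < ∞ := fun a =>
    calc F a ≤ ∑' i, ENNReal.ofReal (w i) :=
          ENNReal.tsum_le_tsum fun i => indicator_le_self _ _ _
      _ = ENNReal.ofReal (∑' i, w i) := (ENNReal.ofReal_tsum_of_nonneg hw₀ hw).symm
      _ < ∞ := ENNReal.ofReal_lt_top
  have hF_toReal : ∀ a, (F a).toReal = ∑' i, (s i).indicator (fun _ => w i) a := fun a => by
    simp only [F]
    rw [ENNReal.tsum_toReal_eq fun i => ?_]
    · refine tsum_congr fun i => ?_
      by_cases ha : a ∈ s i <;> simp [ha, hw₀ i]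
    · by_cases ha : a ∈ s i <;> simp [ha]
  have hF_meas : ∀ i, AEMeasurable ((s i).indicator fun _ => ENNReal.ofReal (w i)) μ :=
    fun i => (measurable_const.indicator (hs i)).aemeasurable
  simp_rw [← hF_toReal]
  rw [integral_toReal (AEMeasurable.tsum hF_meas) (ae_of_all _ hF_lt_top),
    lintegral_tsum hF_meas]
  simp_rw [lintegral_indicator_const (hs _)]
  rw [ENNReal.tsum_toReal_eq fun i => ENNReal.mul_ne_top ENNReal.ofReal_ne_top (hμs i)]
  simp [ENNReal.toReal_ofReal (hw₀ _), measureReal_def]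

theorem volume_restrict_Ioi_zero_Iio (a : ℝ) :
    volume.restrict (Ioi 0) (Iio a) = ENNReal.ofReal a := by
  rw [Measure.restrict_apply measurableSet_Iio, Iio_inter_Ioi, Real.volume_Ioo, sub_zero]

theorem volume_restrict_Ioi_zero_Ico {a b : ℝ} (ha : 0 ≤ a) :
    volume.restrict (Ioi 0) (Ico a b) = ENNReal.ofReal (b - a) := by
  rw [Measure.restrict_congr_set Ioi_ae_eq_Ici,
    Measure.restrict_eq_self _ (Ico_subset_Ici_self.trans (Ici_subset_Ici.mpr ha)),
    Real.volume_Ico]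

theorem tsum_mul_posPart_sub_of_symm {V : Type*} {m : V → V → ℝ} (hm₀ : ∀ u v, 0 ≤ m u v)
    (hm : ∀ u v, m u v = m v u) (x : V → ℝ) :
    ∑' q : V × V, m q.1 q.2 * (x q.1 - x q.2)⁺
      = 1 / 2 * ∑' q : V × V, m q.1 q.2 * |x q.1 - x q.2| := by
  -- In `ℝ≥0∞` no summability is needed; if `m |x u - x v|` is not summable, both sides are `0`.
  set E : (V × V → ℝ) → ℝ≥0∞ := fun h => ∑' q, ENNReal.ofReal (h q)
  have hE : ∀ h : V × V → ℝ, (∀ q, 0 ≤ h q) → ∑' q, h q = (E h).toReal := fun h h₀ => by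
    rw [ENNReal.tsum_toReal_eq fun _ => ENNReal.ofReal_ne_top]
    exact tsum_congr fun q => (ENNReal.toReal_ofReal (h₀ q)).symm
  have hswap : E (fun q => m q.1 q.2 * (x q.1 - x q.2)⁻)
      = E (fun q => m q.1 q.2 * (x q.1 - x q.2)⁺) := by
    simp only [E]
    rw [← (Equiv.prodComm V V).tsum_eq]
    simp [hm, ← posPart_neg]
  have hsplit : E (fun q => m q.1 q.2 * |x q.1 - x q.2|)
      = E (fun q => m q.1 q.2 * (x q.1 - x q.2)⁺)
        + E (fun q => m q.1 q.2 * (x q.1 - x q.2)⁻) := by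
    simp only [E]
    rw [← ENNReal.tsum_add]
    refine tsum_congr fun q => ?_
    rw [← ENNReal.ofReal_add (mul_nonneg (hm₀ _ _) (posPart_nonneg _))
      (mul_nonneg (hm₀ _ _) (negPart_nonneg _)), ← mul_add, posPart_add_negPart]
  rw [hE _ fun q => mul_nonneg (hm₀ _ _) (posPart_nonneg _),
    hE _ fun q => mul_nonneg (hm₀ _ _) (abs_nonneg _), hsplit, hswap, ← two_mul,
    ENNReal.toReal_mul, ENNReal.toReal_ofNat]
  ring

namespace SummableWeightedGraph

variable {V : Type*} (G : SummableWeightedGraph V)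

theorem summable_deg : Summable G.deg := G.summable.prod

theorem deg_nonneg (v : V) : 0 ≤ G.deg v := tsum_nonneg fun u => G.nonneg v u

theorem setWeight_eq_tsum_indicator (S : Set V) : G.setWeight S = ∑' v, S.indicator G.deg v :=
  tsum_subtype S G.deg

theorem boundaryWeight_eq_tsum_indicator (S : Set V) :
    G.boundaryWeight S = ∑' q : V × V, (S ×ˢ Sᶜ).indicator (fun q => G.m q.1 q.2) q := by
  rw [← tsum_subtype, boundaryWeight, ← (Equiv.Set.prod S Sᶜ).tsum_eq]
  rfl

theorem setWeight_superlevel (g : V → ℝ) (t : ℝ) :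
    G.setWeight {v | t < g v} = ∑' v, (Iio (g v)).indicator (fun _ => G.deg v) t := by
  rw [setWeight_eq_tsum_indicator]
  refine tsum_congr fun v => ?_
  by_cases h : t < g v <;> simp [h]

theorem boundaryWeight_superlevel (g : V → ℝ) (t : ℝ) :
    G.boundaryWeight {v | t < g v}
      = ∑' q : V × V, (Ico (g q.2) (g q.1)).indicator (fun _ => G.m q.1 q.2) t := by
  rw [boundaryWeight_eq_tsum_indicator]
  refine tsum_congr fun q => ?_
  by_cases h₁ : t < g q.1 <;> by_cases h₂ : t < g q.2 <;> simp [indicator_apply, h₁, h₂]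

variable [Countable V]

theorem integral_setWeight_superlevel {g : V → ℝ} (hg : ∀ v, 0 ≤ g v) :
    ∫ t in Ioi 0, G.setWeight {v | t < g v} = ∑' v, G.deg v * g v := by
  simp_rw [setWeight_superlevel]
  rw [integral_tsum_indicator_const G.deg_nonneg G.summable_deg (fun _ => measurableSet_Iio)
    fun v => (volume_restrict_Ioi_zero_Iio (g v)).trans_ne ENNReal.ofReal_ne_top]
  simp only [measureReal_def, volume_restrict_Ioi_zero_Iio, ENNReal.toReal_ofReal (hg _)]

theorem integral_boundaryWeight_superlevel {g : V → ℝ} (hg : ∀ v, 0 ≤ g v) :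
    ∫ t in Ioi 0, G.boundaryWeight {v | t < g v}
      = 1 / 2 * ∑' q : V × V, G.m q.1 q.2 * |g q.1 - g q.2| := by
  simp_rw [boundaryWeight_superlevel]
  rw [integral_tsum_indicator_const (w := fun q : V × V => G.m q.1 q.2)
    (fun q => G.nonneg q.1 q.2) G.summable (fun _ => measurableSet_Ico)
    fun q => (volume_restrict_Ioi_zero_Ico (hg q.2)).trans_ne ENNReal.ofReal_ne_top,
    ← tsum_mul_posPart_sub_of_symm G.nonneg G.symm]
  simp only [measureReal_def, volume_restrict_Ioi_zero_Ico (hg _), ENNReal.toReal_ofReal',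
    posPart_def]

end SummableWeightedGraph

open SummableWeightedGraph in
theorem coarea_formulae_general {V : Type*} [MeasurableSpace V]
    [Countable V] (G : SummableWeightedGraph V) (f : Lp ℝ 2 G.measure) :
    (∫ t in Set.Ioi (0 : ℝ), G.setWeight {v : V | t < (f v) ^ 2})
        = ∑' v : V, G.deg v * (f v) ^ 2 ∧
    (∫ t in Set.Ioi (0 : ℝ), G.boundaryWeight {v : V | t < (f v) ^ 2})
        = (1 / 2) * ∑' q : V × V, G.m q.1 q.2 * |(f q.1) ^ 2 - (f q.2) ^ 2| :=
  ⟨G.integral_setWeight_superlevel fun _ => sq_nonneg _,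
    G.integral_boundaryWeight_superlevel fun _ => sq_nonneg _⟩

open SummableWeightedGraph in
/-- co-area formulae. -/
theorem coarea_formulae {V : Type*} [MeasurableSpace V] [MeasurableSingletonClass V]
    [Countable V] [Nonempty V] (G : SummableWeightedGraph V) (f : Lp ℝ 2 G.measure) :
    (∫ t in Set.Ioi (0 : ℝ), G.setWeight {v : V | t < (f v) ^ 2})
        = ∑' v : V, G.deg v * (f v) ^ 2 ∧
    (∫ t in Set.Ioi (0 : ℝ), G.boundaryWeight {v : V | t < (f v) ^ 2})
        = (1 / 2) * ∑' q : V × V, G.m q.1 q.2 * |(f q.1) ^ 2 - (f q.2) ^ 2| :=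
  coarea_formulae_general G f
end

section
/- Let (G,m) be a summable weighted graph and let ψ : V → {1,−1} be any function. Let T_ψ : L²(G,m) → L²(G,m) be the (self-inverse, bounded) multiplication operator (T_ψ f)(v) = ψ(v)·f(v), and let P_ψ : L²(G,m) → L²(G,m) be the bounded operator (P_ψ f)(v) = (1/m(v))·∑_{u : ψ(u) = ψ(v)} m(v,u)·f(u). Then T_ψ ∘ Δ ∘ T_ψ = 2·I − Δ − 2·P_ψ, and consequently σ(Δ) = σ(2·I − Δ − 2·P_ψ). -/
open MeasureTheory

/-!
Conjugation by `T_ψ` flips the sign of exactly those edge terms of `Δ` that join vertices of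
opposite sign: at a vertex `v`, `ψ v ψ u = 1` when `ψ u = ψ v` and `-1` otherwise, so
`ψ v ∑ m(v,u) ψ u f u = 2 ∑_{ψ u = ψ v} m(v,u) f u - ∑ m(v,u) f u`, which is the identity.
Splitting the series is legitimate because `u ↦ m(v,u) f u` is summable for `f ∈ L²`, and
every vertex has positive mass, so the a.e. defining formulas hold at every vertex.
Since `T_ψ² = I`, `T_ψ` is a unit equal to its own inverse, and conjugation by a unit
preserves the spectrum.
-/

open scoped ENNReal

theorem spectrum_mul_mul_of_mul_self_eq_one {R A : Type*} [CommSemiring R] [Ring A]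
    [Algebra R A] {t : A} (ht : t * t = 1) (a : A) : spectrum R (t * a * t) = spectrum R a :=
  spectrum.units_conjugate (u := ⟨t, t, ht, ht⟩)

theorem sign_mul_tsum_sign_mul {ι : Type*} {ψ : ι → ℝ} (hψ : ∀ i, ψ i = 1 ∨ ψ i = -1)
    {g : ι → ℝ} (hg : Summable g) (j : ι) :
    ψ j * ∑' i, ψ i * g i = 2 * ∑' i : {i // ψ i = ψ j}, g i - ∑' i, g i := by
  have hsign : ∀ i, ψ j * (ψ i * g i) = 2 * {i | ψ i = ψ j}.indicator g i - g i := by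
    intro i
    by_cases h : ψ i = ψ j
    · rw [Set.indicator_of_mem (show i ∈ {i | ψ i = ψ j} from h), h]
      rcases hψ j with h' | h' <;> rw [h'] <;> ring
    · rw [Set.indicator_of_notMem (show i ∉ {i | ψ i = ψ j} from h)]
      rcases hψ i with hi | hi <;> rcases hψ j with hj | hj <;> rw [hi, hj] at h ⊢ <;>
        first | exact absurd rfl h | ring
  rw [← tsum_mul_left, tsum_congr hsign, ((hg.indicator _).mul_left 2).tsum_sub hg,
    tsum_mul_left, ← tsum_subtype]
  rfl

namespace SummableWeightedGraph

variable {V : Type*} (G : SummableWeightedGraph V)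

theorem deg_pos (v : V) : 0 < G.deg v := G.noIsolated v

theorem m_le_deg (v u : V) : G.m v u ≤ G.deg u := by
  rw [G.symm]
  exact (G.summable.prod_factor u).le_tsum v fun w _ => G.nonneg u w

variable [MeasurableSpace V]

theorem measure_singleton_pos (v : V) : 0 < G.measure {v} := by
  refine lt_of_lt_of_le ?_ (Measure.le_iff'.mp (Measure.le_sum _ v) {v})
  simpa [Measure.dirac_apply_of_mem] using G.deg_pos v

theorem ae_iff_forall {p : V → Prop} : (∀ᵐ v ∂G.measure, p v) ↔ ∀ v, p v := by
  refine ⟨fun h v => ?_, Filter.Eventually.of_forall⟩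
  by_contra hv
  exact (G.measure_singleton_pos v).ne'
    (measure_mono_null (Set.singleton_subset_iff.2 hv) (ae_iff.1 h))

variable {G} in
theorem mul_self_eq_one_of_apply_eq_mul {ψ : V → ℝ} (hψ : ∀ v, ψ v * ψ v = 1)
    {T : Lp ℝ 2 G.measure →L[ℝ] Lp ℝ 2 G.measure}
    (hT : ∀ f : Lp ℝ 2 G.measure, ∀ᵐ v ∂G.measure, T f v = ψ v * f v) : T * T = 1 := by
  refine ContinuousLinearMap.ext fun f => Lp.ext (Filter.Eventually.of_forall fun v => ?_)
  change T (T f) v = f v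
  rw [G.ae_iff_forall.1 (hT _), G.ae_iff_forall.1 (hT f), ← mul_assoc, hψ, one_mul]

variable [MeasurableSingletonClass V]

theorem lintegral_measure (g : V → ℝ≥0∞) :
    ∫⁻ v, g v ∂G.measure = ∑' v, ENNReal.ofReal (G.deg v) * g v := by
  simp only [SummableWeightedGraph.measure, lintegral_sum_measure, lintegral_smul_measure,
    lintegral_dirac, smul_eq_mul]

theorem summable_deg_mul_sq (f : Lp ℝ 2 G.measure) :
    Summable fun v => G.deg v * f v ^ 2 := by
  have hfin := (Lp.memLp f).integrable_sq.2
  rw [hasFiniteIntegral_iff_enorm, lintegral_measure] at hfin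
  refine (ENNReal.summable_toReal hfin.ne).congr fun v => ?_
  rw [ENNReal.toReal_mul, ENNReal.toReal_ofReal (G.deg_pos v).le, toReal_enorm,
    Real.norm_eq_abs, abs_of_nonneg (sq_nonneg _)]

theorem summable_m_mul (f : Lp ℝ 2 G.measure) (v : V) :
    Summable fun u => G.m v u * f u := by
  refine Summable.of_norm_bounded
    (((G.summable.prod_factor v).add (G.summable_deg_mul_sq f)).div_const 2) fun u => ?_
  have hm := G.nonneg v u
  have hmd := G.m_le_deg v u
  rw [Real.norm_eq_abs, abs_mul, abs_of_nonneg hm]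
  -- AM-GM: `m |f| ≤ (m + m f²) / 2`, and `m f² ≤ deg f²`
  nlinarith [mul_nonneg hm (sq_nonneg (|f u| - 1)),
    mul_nonneg (sub_nonneg.2 hmd) (sq_nonneg (f u)), sq_abs (f u)]

variable {G}

theorem sign_conj_laplacian_eq {ψ : V → ℝ} (hψ : ∀ v, ψ v = 1 ∨ ψ v = -1)
    {Δ T P : Lp ℝ 2 G.measure →L[ℝ] Lp ℝ 2 G.measure}
    (hΔ : G.IsLaplacian Δ)
    (hT : ∀ f : Lp ℝ 2 G.measure, ∀ᵐ v ∂G.measure, T f v = ψ v * f v)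
    (hP : ∀ f : Lp ℝ 2 G.measure, ∀ᵐ v ∂G.measure,
      P f v = (G.deg v)⁻¹ * ∑' u : {u : V // ψ u = ψ v}, G.m v u * f u) :
    T.comp (Δ.comp T) = (2 : ℝ) • 1 - Δ - (2 : ℝ) • P := by
  have hT' := fun f => G.ae_iff_forall.1 (hT f)
  have hΔ' := fun f => G.ae_iff_forall.1 (hΔ f)
  have hP' := fun f => G.ae_iff_forall.1 (hP f)
  refine ContinuousLinearMap.ext fun f => Lp.ext ?_
  simp only [ContinuousLinearMap.comp_apply, sub_apply, smul_apply,
    one_apply_eq_self]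
  filter_upwards [Lp.coeFn_sub ((2 : ℝ) • f - Δ f) ((2 : ℝ) • P f),
    Lp.coeFn_sub ((2 : ℝ) • f) (Δ f), Lp.coeFn_smul (2 : ℝ) f,
    Lp.coeFn_smul (2 : ℝ) (P f)] with v h₁ h₂ h₃ h₄
  have hsum : ∑' u, G.m v u * T f u = ∑' u, ψ u * (G.m v u * f u) :=
    tsum_congr fun u => by rw [hT', mul_left_comm]
  rw [h₁, Pi.sub_apply, h₂, Pi.sub_apply, h₃, h₄, Pi.smul_apply, Pi.smul_apply, smul_eq_mul,
    smul_eq_mul, hT' (Δ (T f)) v, hΔ' (T f) v, hΔ' f v, hP' f v, hT' f v, hsum]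
  linear_combination f v * mul_self_eq_one_iff.2 (hψ v) -
    (G.deg v)⁻¹ * sign_mul_tsum_sign_mul hψ (G.summable_m_mul f v) v

end SummableWeightedGraph

open SummableWeightedGraph in
theorem conjugated_laplacian_general {V : Type*} [MeasurableSpace V] [MeasurableSingletonClass V]
    (G : SummableWeightedGraph V)
    (ψ : V → ℝ) (hψ : ∀ v, ψ v = 1 ∨ ψ v = -1)
    (Δ T P : Lp ℝ 2 G.measure →L[ℝ] Lp ℝ 2 G.measure)
    (hΔ : G.IsLaplacian Δ)
    (hT : ∀ f : Lp ℝ 2 G.measure, ∀ᵐ v ∂G.measure, T f v = ψ v * f v)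
    (hP : ∀ f : Lp ℝ 2 G.measure, ∀ᵐ v ∂G.measure,
      P f v = (G.deg v)⁻¹ * ∑' u : {u : V // ψ u = ψ v}, G.m v u * f u) :
    T.comp (Δ.comp T)
        = (2 : ℝ) • (1 : Lp ℝ 2 G.measure →L[ℝ] Lp ℝ 2 G.measure) - Δ - (2 : ℝ) • P ∧
    spectrum ℝ Δ
        = spectrum ℝ
          ((2 : ℝ) • (1 : Lp ℝ 2 G.measure →L[ℝ] Lp ℝ 2 G.measure) - Δ - (2 : ℝ) • P) := by
  have hconj := sign_conj_laplacian_eq hψ hΔ hT hP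
  have hTT := mul_self_eq_one_of_apply_eq_mul (fun v => mul_self_eq_one_iff.2 (hψ v)) hT
  refine ⟨hconj, ?_⟩
  rw [← hconj]
  exact (spectrum_mul_mul_of_mul_self_eq_one hTT Δ).symm

open SummableWeightedGraph in
/-- `Tψ ∘ Δ ∘ Tψ = 2·I - Δ - 2·Pψ`, hence
`σ(Δ) = σ(2·I - Δ - 2·Pψ)`. -/
theorem conjugated_laplacian {V : Type*} [MeasurableSpace V] [MeasurableSingletonClass V]
    [Countable V] [Nonempty V] (G : SummableWeightedGraph V)
    (ψ : V → ℝ) (hψ : ∀ v, ψ v = 1 ∨ ψ v = -1)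
    (Δ T P : Lp ℝ 2 G.measure →L[ℝ] Lp ℝ 2 G.measure)
    (hΔ : G.IsLaplacian Δ)
    (hT : ∀ f : Lp ℝ 2 G.measure, ∀ᵐ v ∂G.measure, T f v = ψ v * f v)
    (hP : ∀ f : Lp ℝ 2 G.measure, ∀ᵐ v ∂G.measure,
      P f v = (G.deg v)⁻¹ * ∑' u : {u : V // ψ u = ψ v}, G.m v u * f u) :
    T.comp (Δ.comp T)
        = (2 : ℝ) • (1 : Lp ℝ 2 G.measure →L[ℝ] Lp ℝ 2 G.measure) - Δ - (2 : ℝ) • P ∧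
    spectrum ℝ Δ
        = spectrum ℝ
          ((2 : ℝ) • (1 : Lp ℝ 2 G.measure →L[ℝ] Lp ℝ 2 G.measure) - Δ - (2 : ℝ) • P) :=
  conjugated_laplacian_general G ψ hψ Δ T P hΔ hT hP
end
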